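/- arXiv:2008.03056 — 3 statements merged into one kernel-verified Lean document; each statement's English description precedes it below -/
import Mathlib

section
/- Let Ω ⊆ ℝ^N be a Lebesgue-measurable set and p: Ω → ℝ measurable with 1 < p⁻ ≤ p(x) ≤ p⁺ < ∞ for a.e. x. Let (u_n) be a sequence of measurable functions Ω → ℝ such that sup_n ∫_Ω |u_n(x)|^{p(x)} dx < ∞ and u_n(x) → u(x) for a.e. x ∈ Ω. Then ∫_Ω |u(x)|^{p(x)} dx < ∞ and u_n converges weakly to u in L^{p(·)}(Ω), i.e. ∫_Ω u_n(x) φ(x) dx → ∫_Ω u(x) φ(x) dx as n → ∞ for every measurable φ: Ω → ℝ with ∫_Ω |φ(x)|^{p'(x)} dx < ∞. -/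
/-!
Fatou's lemma bounds the modular of the limit by `B`. For weak convergence put
`v n = u n - ulim`; the elementary bound `|a - b|^p ≤ 2^{p⁺} (|a|^p + |b|^p)` keeps the modulars
of `v n` uniformly bounded by some `C`. Young's inequality with a parameter `ε ≤ 1` gives
`|v n| |φ| ≤ ε^{p⁻} |v n|^p + ε^{-p⁻'} |φ|^{p'}`, so the positive part of
`|v n| |φ| - ε^{p⁻} |v n|^p` is dominated by an integrable function and tends to `0` a.e.
By dominated convergence, `limsup ∫ |v n| |φ| ≤ ε^{p⁻} C`, and `ε → 0` finishes the proof.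
-/

open MeasureTheory Filter ENNReal Topology

lemma young_inequality_eps {pm p a b ε : ℝ} (hpm : 1 < pm) (hp : pm ≤ p)
    (ha : 0 ≤ a) (hb : 0 ≤ b) (hε : 0 < ε) (hε1 : ε ≤ 1) :
    a * b ≤ ε ^ pm * a ^ p + ε ^ (-pm.conjExponent) * b ^ p.conjExponent := by
  have hp1 : 1 < p := hpm.trans_le hp
  have hq1 : 1 ≤ p.conjExponent := by
    rw [Real.conjExponent, le_div_iff₀ (by linarith)]; linarith
  have hq : p.conjExponent ≤ pm.conjExponent := by
    rw [Real.conjExponent, Real.conjExponent, div_le_div_iff₀ (by linarith) (by linarith)]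
    nlinarith
  have hεa : (ε * a) ^ p / p ≤ ε ^ pm * a ^ p := by
    rw [Real.mul_rpow hε.le ha]
    calc ε ^ p * a ^ p / p ≤ ε ^ p * a ^ p := div_le_self (by positivity) hp1.le
      _ ≤ ε ^ pm * a ^ p := mul_le_mul_of_nonneg_right
          (Real.rpow_le_rpow_of_exponent_ge hε hε1 hp) (by positivity)
  have hbε : (b / ε) ^ p.conjExponent / p.conjExponent
      ≤ ε ^ (-pm.conjExponent) * b ^ p.conjExponent := by
    rw [Real.div_rpow hb hε.le, div_eq_mul_inv _ (ε ^ _), ← Real.rpow_neg hε.le, mul_comm]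
    calc ε ^ (-p.conjExponent) * b ^ p.conjExponent / p.conjExponent
        ≤ ε ^ (-p.conjExponent) * b ^ p.conjExponent := div_le_self (by positivity) hq1
      _ ≤ ε ^ (-pm.conjExponent) * b ^ p.conjExponent := mul_le_mul_of_nonneg_right
          (Real.rpow_le_rpow_of_exponent_ge hε hε1 (neg_le_neg hq)) (by positivity)
  calc a * b = (ε * a) * (b / ε) := by field_simp
    _ ≤ (ε * a) ^ p / p + (b / ε) ^ p.conjExponent / p.conjExponent :=
      Real.young_inequality_of_nonneg (by positivity) (by positivity)
        (Real.HolderConjugate.conjExponent hp1)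
    _ ≤ _ := add_le_add hεa hbε

lemma abs_sub_rpow_le {a b p pM : ℝ} (hp : 0 ≤ p) (hpM : p ≤ pM) :
    |a - b| ^ p ≤ 2 ^ pM * (|a| ^ p + |b| ^ p) := by
  have hmax : |a - b| ≤ 2 * max |a| |b| := by
    linarith [abs_sub a b, le_max_left |a| |b|, le_max_right |a| |b|]
  have hmax_rpow : max |a| |b| ^ p ≤ |a| ^ p + |b| ^ p := by
    rcases max_cases |a| |b| with ⟨h, _⟩ | ⟨h, _⟩ <;> rw [h]
    · linarith [Real.rpow_nonneg (abs_nonneg b) p]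
    · linarith [Real.rpow_nonneg (abs_nonneg a) p]
  calc |a - b| ^ p ≤ (2 * max |a| |b|) ^ p := by gcongr
    _ = 2 ^ p * max |a| |b| ^ p := Real.mul_rpow zero_le_two (by positivity)
    _ ≤ 2 ^ pM * (|a| ^ p + |b| ^ p) := by gcongr; exact one_le_two

/-- The modular `ρ_{p(·)}` of the variable exponent Lebesgue space `L^{p(·)}(μ)`. -/
noncomputable def modular {α : Type*} [MeasurableSpace α] (μ : Measure α) (p : α → ℝ)
    (f : α → ℝ) : ℝ≥0∞ :=
  ∫⁻ x, ENNReal.ofReal (|f x| ^ p x) ∂μ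

section
variable {α : Type*} [MeasurableSpace α] {μ : Measure α} {p : α → ℝ}

lemma measurable_ofReal_abs_rpow {f : α → ℝ} (hf : Measurable f) (hp : Measurable p) :
    Measurable fun x => ENNReal.ofReal (|f x| ^ p x) :=
  (hf.abs.pow hp).ennreal_ofReal

lemma modular_le_of_tendsto (hp : Measurable p) (hp0 : ∀ᵐ x ∂μ, 0 ≤ p x)
    {u : ℕ → α → ℝ} {f : α → ℝ} (hu : ∀ n, Measurable (u n))
    (hlim : ∀ᵐ x ∂μ, Tendsto (fun n => u n x) atTop (𝓝 (f x)))
    {B : ℝ≥0∞} (hB : ∀ n, modular μ p (u n) ≤ B) : modular μ p f ≤ B := by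
  have hpointwise : ∀ᵐ x ∂μ, ENNReal.ofReal (|f x| ^ p x)
      = liminf (fun n => ENNReal.ofReal (|u n x| ^ p x)) atTop := by
    filter_upwards [hlim, hp0] with x hx hpx
    refine (Tendsto.liminf_eq ?_).symm
    exact ENNReal.continuous_ofReal.continuousAt.tendsto.comp
      (((Real.continuous_rpow_const hpx).comp continuous_abs).continuousAt.tendsto.comp hx)
  calc modular μ p f = ∫⁻ x, liminf (fun n => ENNReal.ofReal (|u n x| ^ p x)) atTop ∂μ :=
        lintegral_congr_ae hpointwise
    _ ≤ liminf (fun n => modular μ p (u n)) atTop :=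
        lintegral_liminf_le fun n => measurable_ofReal_abs_rpow (hu n) hp
    _ ≤ B := liminf_le_of_frequently_le (Frequently.of_forall hB)

lemma modular_sub_le (hp : Measurable p) {pM : ℝ} (hpb : ∀ᵐ x ∂μ, 0 ≤ p x ∧ p x ≤ pM)
    {f : α → ℝ} (hf : Measurable f) (g : α → ℝ) :
    modular μ p (fun x => f x - g x)
      ≤ ENNReal.ofReal (2 ^ pM) * (modular μ p f + modular μ p g) := by
  calc modular μ p (fun x => f x - g x)
      ≤ ∫⁻ x, ENNReal.ofReal (2 ^ pM) *
          (ENNReal.ofReal (|f x| ^ p x) + ENNReal.ofReal (|g x| ^ p x)) ∂μ := by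
        refine lintegral_mono_ae ?_
        filter_upwards [hpb] with x hpx
        rw [← ENNReal.ofReal_add (by positivity) (by positivity),
          ← ENNReal.ofReal_mul (by positivity)]
        exact ENNReal.ofReal_le_ofReal (abs_sub_rpow_le hpx.1 hpx.2)
    _ = ENNReal.ofReal (2 ^ pM) * (modular μ p f + modular μ p g) := by
        rw [lintegral_const_mul' _ _ ENNReal.ofReal_ne_top,
          lintegral_add_left (measurable_ofReal_abs_rpow hf hp)]
        rfl

lemma lintegral_ofReal_mul_le_modular_add (hp : Measurable p) (hp1 : ∀ᵐ x ∂μ, 1 < p x)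
    {f : α → ℝ} (hf : Measurable f) (φ : α → ℝ) :
    ∫⁻ x, ENNReal.ofReal (|f x| * |φ x|) ∂μ
      ≤ modular μ p f + modular μ (fun x => (p x).conjExponent) φ := by
  calc ∫⁻ x, ENNReal.ofReal (|f x| * |φ x|) ∂μ
      ≤ ∫⁻ x, ENNReal.ofReal (|f x| ^ p x)
          + ENNReal.ofReal (|φ x| ^ (p x).conjExponent) ∂μ := by
        refine lintegral_mono_ae ?_
        filter_upwards [hp1] with x hpx
        have := young_inequality_eps hpx le_rfl (abs_nonneg (f x)) (abs_nonneg (φ x))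
          one_pos le_rfl
        rw [Real.one_rpow, Real.one_rpow, one_mul, one_mul] at this
        rw [← ENNReal.ofReal_add (by positivity) (by positivity)]
        exact ENNReal.ofReal_le_ofReal this
    _ = _ := lintegral_add_left (measurable_ofReal_abs_rpow hf hp) _

lemma integrable_mul_of_modular_lt_top (hp : Measurable p) (hp1 : ∀ᵐ x ∂μ, 1 < p x)
    {f φ : α → ℝ} (hf : Measurable f) (hφ : Measurable φ) (hfin : modular μ p f < ⊤)
    (hφfin : modular μ (fun x => (p x).conjExponent) φ < ⊤) :
    Integrable (fun x => f x * φ x) μ := by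
  refine ⟨(hf.mul hφ).aestronglyMeasurable, ?_⟩
  rw [hasFiniteIntegral_iff_norm]
  simp_rw [Real.norm_eq_abs, abs_mul]
  exact (lintegral_ofReal_mul_le_modular_add hp hp1 hf φ).trans_lt
    (ENNReal.add_lt_top.2 ⟨hfin, hφfin⟩)

variable {pm : ℝ} {v : ℕ → α → ℝ} {φ : α → ℝ}

/-- `ENNReal.ofReal` truncates at `0`, so the integrand is a positive part. -/
lemma tendsto_lintegral_ofReal_mul_sub_rpow (hp : Measurable p) (hpm : 1 < pm)
    (hpb : ∀ᵐ x ∂μ, pm ≤ p x) (hv : ∀ n, Measurable (v n))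
    (hv0 : ∀ᵐ x ∂μ, Tendsto (fun n => v n x) atTop (𝓝 0)) (hφ : Measurable φ)
    (hφfin : modular μ (fun x => (p x).conjExponent) φ ≠ ⊤) {ε : ℝ} (hε : 0 < ε) (hε1 : ε ≤ 1) :
    Tendsto (fun n => ∫⁻ x, ENNReal.ofReal (|v n x| * |φ x| - ε ^ pm * |v n x| ^ p x) ∂μ)
      atTop (𝓝 0) := by
  have hbound : ∀ n, ∀ᵐ x ∂μ,
      ENNReal.ofReal (|v n x| * |φ x| - ε ^ pm * |v n x| ^ p x)
        ≤ ENNReal.ofReal (ε ^ (-pm.conjExponent)) * ENNReal.ofReal (|φ x| ^ (p x).conjExponent) := by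
    intro n
    filter_upwards [hpb] with x hpx
    rw [← ENNReal.ofReal_mul (by positivity)]
    refine ENNReal.ofReal_le_ofReal ?_
    linarith [young_inequality_eps hpm hpx (abs_nonneg (v n x)) (abs_nonneg (φ x)) hε hε1]
  have hlim : ∀ᵐ x ∂μ, Tendsto
      (fun n => ENNReal.ofReal (|v n x| * |φ x| - ε ^ pm * |v n x| ^ p x)) atTop (𝓝 0) := by
    filter_upwards [hv0] with x hx
    have hprod : Tendsto (fun n => ENNReal.ofReal (|v n x| * |φ x|)) atTop (𝓝 0) := by
      simpa using ENNReal.tendsto_ofReal (hx.abs.mul_const |φ x|)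
    refine tendsto_of_tendsto_of_tendsto_of_le_of_le tendsto_const_nhds hprod
      (fun _ => zero_le) fun n => ENNReal.ofReal_le_ofReal ?_
    have : 0 ≤ ε ^ pm * |v n x| ^ p x := by positivity
    linarith
  simpa using tendsto_lintegral_of_dominated_convergence _
    (fun n => (((hv n).abs.mul hφ.abs).sub
      (measurable_const.mul ((hv n).abs.pow hp))).ennreal_ofReal) hbound
    (by rw [lintegral_const_mul' _ _ ENNReal.ofReal_ne_top]
        exact ENNReal.mul_ne_top ENNReal.ofReal_ne_top hφfin) hlim

lemma limsup_lintegral_mul_le (hp : Measurable p) (hpm : 1 < pm)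
    (hpb : ∀ᵐ x ∂μ, pm ≤ p x) (hv : ∀ n, Measurable (v n))
    (hv0 : ∀ᵐ x ∂μ, Tendsto (fun n => v n x) atTop (𝓝 0)) {C : ℝ≥0∞}
    (hvC : ∀ n, modular μ p (v n) ≤ C) (hφ : Measurable φ)
    (hφfin : modular μ (fun x => (p x).conjExponent) φ ≠ ⊤) {ε : ℝ} (hε : 0 < ε) (hε1 : ε ≤ 1) :
    limsup (fun n => ∫⁻ x, ENNReal.ofReal (|v n x| * |φ x|) ∂μ) atTop
      ≤ ENNReal.ofReal (ε ^ pm) * C := by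
  set R : ℕ → ℝ≥0∞ :=
    fun n => ∫⁻ x, ENNReal.ofReal (|v n x| * |φ x| - ε ^ pm * |v n x| ^ p x) ∂μ
  have hsplit : ∀ n, ∫⁻ x, ENNReal.ofReal (|v n x| * |φ x|) ∂μ
      ≤ R n + ENNReal.ofReal (ε ^ pm) * C := by
    intro n
    calc ∫⁻ x, ENNReal.ofReal (|v n x| * |φ x|) ∂μ
        ≤ ∫⁻ x, ENNReal.ofReal (|v n x| * |φ x| - ε ^ pm * |v n x| ^ p x)
            + ENNReal.ofReal (ε ^ pm) * ENNReal.ofReal (|v n x| ^ p x) ∂μ := by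
          refine lintegral_mono fun x => ?_
          rw [← ENNReal.ofReal_mul (by positivity)]
          exact (le_of_eq (by rw [sub_add_cancel])).trans ENNReal.ofReal_add_le
      _ = R n + ENNReal.ofReal (ε ^ pm) * modular μ p (v n) := by
          rw [lintegral_add_right _ ((measurable_ofReal_abs_rpow (hv n) hp).const_mul _),
            lintegral_const_mul' _ _ ENNReal.ofReal_ne_top]
          rfl
      _ ≤ R n + ENNReal.ofReal (ε ^ pm) * C := by gcongr; exact hvC n
  have hR : Tendsto (fun n => R n + ENNReal.ofReal (ε ^ pm) * C) atTop
      (𝓝 (ENNReal.ofReal (ε ^ pm) * C)) := by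
    simpa using (tendsto_lintegral_ofReal_mul_sub_rpow hp hpm hpb hv hv0 hφ hφfin hε hε1).add
      tendsto_const_nhds
  exact (limsup_le_limsup (Eventually.of_forall hsplit)).trans hR.limsup_eq.le

lemma tendsto_lintegral_mul_of_modular_le (hp : Measurable p) (hpm : 1 < pm)
    (hpb : ∀ᵐ x ∂μ, pm ≤ p x) (hv : ∀ n, Measurable (v n))
    (hv0 : ∀ᵐ x ∂μ, Tendsto (fun n => v n x) atTop (𝓝 0)) {C : ℝ≥0∞} (hC : C ≠ ⊤)
    (hvC : ∀ n, modular μ p (v n) ≤ C) (hφ : Measurable φ)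
    (hφfin : modular μ (fun x => (p x).conjExponent) φ ≠ ⊤) :
    Tendsto (fun n => ∫⁻ x, ENNReal.ofReal (|v n x| * |φ x|) ∂μ) atTop (𝓝 0) := by
  have hsmall : Tendsto (fun ε : ℝ => ENNReal.ofReal (ε ^ pm) * C) (𝓝[>] 0) (𝓝 0) := by
    have hrpow : Tendsto (fun ε : ℝ => ε ^ pm) (𝓝[>] 0) (𝓝 0) := by
      simpa [Real.zero_rpow (by positivity : pm ≠ 0)] using
        (Real.continuous_rpow_const (by positivity : (0 : ℝ) ≤ pm)).tendsto 0
          |>.mono_left nhdsWithin_le_nhds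
    simpa using ENNReal.Tendsto.mul_const (ENNReal.tendsto_ofReal hrpow) (Or.inr hC)
  have hlimsup : limsup (fun n => ∫⁻ x, ENNReal.ofReal (|v n x| * |φ x|) ∂μ) atTop ≤ 0 := by
    refine ge_of_tendsto hsmall ?_
    filter_upwards [Ioc_mem_nhdsGT one_pos] with ε hε
    exact limsup_lintegral_mul_le hp hpm hpb hv hv0 hvC hφ hφfin hε.1 hε.2
  exact tendsto_of_le_liminf_of_limsup_le zero_le hlimsup

end

theorem stmt_1_general {N : ℕ} (Ω : Set (Fin N → ℝ))
    (p : (Fin N → ℝ) → ℝ) (hp : Measurable p)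
    (pm pM : ℝ) (hpm : 1 < pm)
    (hpb : ∀ᵐ x ∂(volume.restrict Ω), pm ≤ p x ∧ p x ≤ pM)
    (u : ℕ → (Fin N → ℝ) → ℝ) (hu : ∀ n, Measurable (u n))
    (ulim : (Fin N → ℝ) → ℝ) (hulim : Measurable ulim)
    (B : ℝ≥0∞) (hB : B < ⊤)
    (hmod : ∀ n, ∫⁻ x in Ω, ENNReal.ofReal (|u n x| ^ p x) ≤ B)
    (hae : ∀ᵐ x ∂(volume.restrict Ω),
      Tendsto (fun n => u n x) atTop (nhds (ulim x))) :
    (∫⁻ x in Ω, ENNReal.ofReal (|ulim x| ^ p x)) < ⊤ ∧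
    ∀ φ : (Fin N → ℝ) → ℝ, Measurable φ →
      (∫⁻ x in Ω, ENNReal.ofReal (|φ x| ^ (p x / (p x - 1)))) < ⊤ →
      Tendsto (fun n => ∫ x in Ω, u n x * φ x) atTop
        (nhds (∫ x in Ω, ulim x * φ x)) := by
  set μ : Measure (Fin N → ℝ) := volume.restrict Ω
  have hpm_le : ∀ᵐ x ∂μ, pm ≤ p x := hpb.mono fun x hx => hx.1
  have hp1 : ∀ᵐ x ∂μ, 1 < p x := hpm_le.mono fun x hx => hpm.trans_le hx
  have hp0 : ∀ᵐ x ∂μ, 0 ≤ p x ∧ p x ≤ pM := hpb.mono fun x hx => ⟨by linarith [hx.1], hx.2⟩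
  have hulimB : modular μ p ulim ≤ B :=
    modular_le_of_tendsto hp (hp0.mono fun x hx => hx.1) hu hae hmod
  refine ⟨hulimB.trans_lt hB, fun φ hφ hφfin => ?_⟩
  have hdiff : ∀ n, modular μ p (fun x => u n x - ulim x) ≤ ENNReal.ofReal (2 ^ pM) * (B + B) :=
    fun n => (modular_sub_le hp hp0 (hu n) ulim).trans (by gcongr; exact hmod n)
  have hdiff0 : ∀ᵐ x ∂μ, Tendsto (fun n => u n x - ulim x) atTop (𝓝 0) :=
    hae.mono fun x hx => by simpa using hx.sub_const (ulim x)
  have hL1 := tendsto_lintegral_mul_of_modular_le (v := fun n x => u n x - ulim x) hp hpm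
    hpm_le (fun n => (hu n).sub hulim) hdiff0 (by finiteness) hdiff hφ hφfin.ne
  have hint : ∀ f, Measurable f → modular μ p f ≤ B → Integrable (fun x => f x * φ x) μ :=
    fun f hf hfB => integrable_mul_of_modular_lt_top hp hp1 hf hφ (hfB.trans_lt hB) hφfin
  rw [← tendsto_sub_nhds_zero_iff]
  refine squeeze_zero_norm (fun n => ?_) ((ENNReal.tendsto_toReal zero_ne_top).comp hL1)
  rw [← integral_sub (hint _ (hu n) (hmod n)) (hint _ hulim hulimB), Function.comp_apply]
  refine (norm_integral_le_lintegral_norm _).trans_eq ?_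
  simp_rw [Real.norm_eq_abs, ← sub_mul, abs_mul]

/-- Lemma 2.3 of the paper: a sequence bounded in the modular of the
variable exponent Lebesgue space `L^{p(·)}(Ω)` which converges a.e. has a limit with
finite modular and converges weakly, i.e. against every `φ` with finite conjugate
modular. -/
theorem stmt_1 {N : ℕ} (Ω : Set (Fin N → ℝ)) (hΩ : MeasurableSet Ω)
    (p : (Fin N → ℝ) → ℝ) (hp : Measurable p)
    (pm pM : ℝ) (hpm : 1 < pm)
    (hpb : ∀ᵐ x ∂(volume.restrict Ω), pm ≤ p x ∧ p x ≤ pM)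
    (u : ℕ → (Fin N → ℝ) → ℝ) (hu : ∀ n, Measurable (u n))
    (ulim : (Fin N → ℝ) → ℝ) (hulim : Measurable ulim)
    (B : ℝ≥0∞) (hB : B < ⊤)
    (hmod : ∀ n, ∫⁻ x in Ω, ENNReal.ofReal (|u n x| ^ p x) ≤ B)
    (hae : ∀ᵐ x ∂(volume.restrict Ω),
      Tendsto (fun n => u n x) atTop (nhds (ulim x))) :
    (∫⁻ x in Ω, ENNReal.ofReal (|ulim x| ^ p x)) < ⊤ ∧
    ∀ φ : (Fin N → ℝ) → ℝ, Measurable φ →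
      (∫⁻ x in Ω, ENNReal.ofReal (|φ x| ^ (p x / (p x - 1)))) < ⊤ →
      Tendsto (fun n => ∫ x in Ω, u n x * φ x) atTop
        (nhds (∫ x in Ω, ulim x * φ x)) :=
  stmt_1_general Ω p hp pm pM hpm hpb u hu ulim hulim B hB hmod hae
end

section
/- Let Ω ⊆ ℝ^N be a Lebesgue-measurable set, let p₁, …, p_N: Ω → ℝ be measurable with 1 < p⁻ ≤ p_i(x) ≤ p⁺ < ∞ a.e. for all i, and let a = (a_1, …, a_N): Ω × ℝ × ℝ^N → ℝ^N satisfy the growth condition |a_i(x,s,ξ)| ≤ â_i(|s|)·((Σ_{j=1}^N |ξ_j|^{p_j(x)})^{1/p_i'(x)} + c_i(x)) with â_i: [0,∞) → (0,∞) continuous and nondecreasing and c_i ≥ 0 measurable, and the coercivity condition a(x,s,ξ)·ξ ≥ α Σ_{i=1}^N |ξ_i|^{p_i(x)} with α > 0. Then for every M > 0 and every ε ∈ (0, α) there is a constant C ≥ 0, depending only on ε, N, α, p⁻, p⁺ and max_i â_i(M), such that for a.e. x ∈ Ω, all s ∈ ℝ with |s| ≤ M, and all ξ, η ∈ ℝ^N: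 a(x,s,ξ)·(ξ − η) ≥ (α − ε) Σ_{i=1}^N |ξ_i|^{p_i(x)} − C (Σ_{i=1}^N |η_i|^{p_i(x)} + Σ_{i=1}^N c_i(x)^{p_i'(x)}). -/
/-!
Write `a·(ξ - η) = a·ξ - a·η`. Coercivity bounds `a·ξ` below by `α Σⱼ |ξⱼ|^{pⱼ}`. By the growth
condition, `|aᵢ| ≤ K ((Σⱼ |ξⱼ|^{pⱼ})^{1/pᵢ'} + cᵢ)` with `K` dominating every `âᵢ(M)`, and Young's
inequality with a small weight `δ` splits `|aᵢ| |ηᵢ|` into `δ Σⱼ |ξⱼ|^{pⱼ}` plus a multiple of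
`|ηᵢ|^{pᵢ} + cᵢ^{pᵢ'}`. Summing over `i` costs `N δ ≤ ε` of the coercivity. Since `pᵢ ∈ [p⁻, p⁺]`,
the multiple can be taken independent of `x` by using `δ^{1-pᵢ} ≤ δ^{1-p⁺}`, `K^{pᵢ} ≤ K^{p⁺}` and
`K^{pᵢ'} ≤ K^{(p⁻)'}` for `δ ≤ 1 ≤ K`.
-/

open MeasureTheory Filter ENNReal

/-- The conjugate exponent `q' = q / (q - 1)`. -/
noncomputable def conjExp (q : ℝ) : ℝ := q / (q - 1)

lemma conjExp_le_conjExp {p q : ℝ} (hp : 1 < p) (hpq : p ≤ q) : conjExp q ≤ conjExp p := by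
  unfold conjExp
  rw [div_le_div_iff₀ (by linarith) (by linarith)]
  nlinarith

namespace Real.HolderConjugate

variable {p q A B : ℝ}

lemma mul_le_rpow_add_rpow (hpq : p.HolderConjugate q) (hA : 0 ≤ A) (hB : 0 ≤ B) :
    A * B ≤ A ^ p + B ^ q := by
  have hAp : A ^ p / p ≤ A ^ p := div_le_self (rpow_nonneg hA _) hpq.lt.le
  have hBq : B ^ q / q ≤ B ^ q := div_le_self (rpow_nonneg hB _) hpq.symm.lt.le
  linarith [young_inequality_of_nonneg hA hB hpq]

/-- Young's inequality with `ε`. -/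
lemma mul_le_mul_rpow_add_rpow (hpq : p.HolderConjugate q) (hA : 0 ≤ A) (hB : 0 ≤ B)
    {ε : ℝ} (hε : 0 < ε) : A * B ≤ ε * A ^ p + ε ^ (1 - q) * B ^ q := by
  have hεp : (0 : ℝ) ≤ ε ^ p⁻¹ := rpow_nonneg hε.le _
  have hεp' : (0 : ℝ) ≤ ε ^ (-p⁻¹) := rpow_nonneg hε.le _
  have hexp : -p⁻¹ * q = 1 - q := by
    rw [neg_mul, inv_mul_eq_div, hpq.symm.div_conj_eq_sub_one]
    ring
  calc A * B = (ε ^ p⁻¹ * A) * (ε ^ (-p⁻¹) * B) := by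
        rw [mul_mul_mul_comm, ← rpow_add hε, add_neg_cancel, rpow_zero, one_mul]
    _ ≤ (ε ^ p⁻¹ * A) ^ p + (ε ^ (-p⁻¹) * B) ^ q :=
        mul_le_rpow_add_rpow hpq (mul_nonneg hεp hA) (mul_nonneg hεp' hB)
    _ = ε * A ^ p + ε ^ (1 - q) * B ^ q := by
        rw [mul_rpow hεp hA, mul_rpow hεp' hB, ← rpow_mul hε.le, ← rpow_mul hε.le,
          inv_mul_cancel₀ hpq.ne_zero, rpow_one, hexp]

end Real.HolderConjugate

open Real in
lemma mul_le_of_abs_le_growth {pm pM p δ K C S c b e : ℝ} (hpm : 1 < pm) (hp : pm ≤ p)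
    (hpM : p ≤ pM) (hδ : 0 < δ) (hδ1 : δ ≤ 1) (hK : 1 ≤ K)
    (hC : δ ^ (1 - pM) * K ^ pM + 1 + K ^ conjExp pm ≤ C) (hS : 0 ≤ S) (hc : 0 ≤ c)
    (hb : |b| ≤ K * (S ^ (1 / conjExp p) + c)) :
    b * e ≤ δ * S + C * (|e| ^ p + c ^ conjExp p) := by
  set q := conjExp p
  have hpq : p.HolderConjugate q := HolderConjugate.conjExponent (hpm.trans_le hp)
  have hK0 : 0 ≤ K := zero_le_one.trans hK
  have hKe : 0 ≤ K * |e| := mul_nonneg hK0 (abs_nonneg e)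
  have young₁ : S ^ (1 / q) * (K * |e|) ≤ δ * S + δ ^ (1 - p) * (K * |e|) ^ p := by
    have := hpq.symm.mul_le_mul_rpow_add_rpow (rpow_nonneg hS (1 / q)) hKe hδ
    rwa [← rpow_mul hS, one_div_mul_cancel hpq.symm.ne_zero, Real.rpow_one] at this
  have young₂ : (K * c) * |e| ≤ (K * c) ^ q + |e| ^ p :=
    hpq.symm.mul_le_rpow_add_rpow (mul_nonneg hK0 hc) (abs_nonneg e)
  have coeff₁ : δ ^ (1 - p) * (K * |e|) ^ p ≤ δ ^ (1 - pM) * K ^ pM * |e| ^ p := by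
    rw [mul_rpow hK0 (abs_nonneg e), ← mul_assoc]
    refine mul_le_mul_of_nonneg_right (mul_le_mul ?_ ?_ (by positivity) (by positivity))
      (by positivity)
    · exact rpow_le_rpow_of_exponent_ge hδ hδ1 (by linarith)
    · exact rpow_le_rpow_of_exponent_le hK hpM
  have coeff₂ : (K * c) ^ q ≤ K ^ conjExp pm * c ^ q := by
    rw [mul_rpow hK0 hc]
    refine mul_le_mul_of_nonneg_right ?_ (by positivity)
    exact rpow_le_rpow_of_exponent_le hK (conjExp_le_conjExp hpm hp)
  have hep : 0 ≤ |e| ^ p := rpow_nonneg (abs_nonneg e) p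
  have hcq : 0 ≤ c ^ q := rpow_nonneg hc q
  have hKq : 0 ≤ K ^ conjExp pm := rpow_nonneg hK0 _
  calc b * e ≤ |b| * |e| := (le_abs_self _).trans (abs_mul b e).le
    _ ≤ K * (S ^ (1 / q) + c) * |e| := by gcongr
    _ = S ^ (1 / q) * (K * |e|) + (K * c) * |e| := by ring
    _ ≤ δ * S + (δ ^ (1 - pM) * K ^ pM + 1) * |e| ^ p + K ^ conjExp pm * c ^ q := by
        linarith
    _ ≤ δ * S + C * (|e| ^ p + c ^ q) := by
        have := mul_le_mul_of_nonneg_right (le_of_add_le_of_nonneg_left hC hKq) hep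
        have := mul_le_mul_of_nonneg_right (le_of_add_le_of_nonneg_right hC (by positivity)) hcq
        linarith

lemma sum_mul_sub_ge_of_growth_of_coercive {ι : Type*} [Fintype ι] {p c b ξ η : ι → ℝ}
    {pm pM δ K C α ε : ℝ} (hpm : 1 < pm) (hp : ∀ i, pm ≤ p i ∧ p i ≤ pM) (hδ : 0 < δ)
    (hδ1 : δ ≤ 1) (hK : 1 ≤ K) (hC : δ ^ (1 - pM) * K ^ pM + 1 + K ^ conjExp pm ≤ C)
    (hδε : Fintype.card ι * δ ≤ ε) (hc : ∀ i, 0 ≤ c i)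
    (hb : ∀ i, |b i| ≤ K * ((∑ j, |ξ j| ^ p j) ^ (1 / conjExp (p i)) + c i))
    (hcoer : α * ∑ i, |ξ i| ^ p i ≤ ∑ i, b i * ξ i) :
    (α - ε) * (∑ i, |ξ i| ^ p i) - C * ((∑ i, |η i| ^ p i) + ∑ i, c i ^ conjExp (p i)) ≤
      ∑ i, b i * (ξ i - η i) := by
  set S := ∑ j, |ξ j| ^ p j
  have hS : 0 ≤ S := by positivity
  have hbη : ∑ i, b i * η i ≤ Fintype.card ι * δ * S +
      C * ((∑ i, |η i| ^ p i) + ∑ i, c i ^ conjExp (p i)) := by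
    calc ∑ i, b i * η i ≤ ∑ i, (δ * S + C * (|η i| ^ p i + c i ^ conjExp (p i))) :=
          Finset.sum_le_sum fun i _ => mul_le_of_abs_le_growth hpm (hp i).1 (hp i).2 hδ hδ1 hK
            hC hS (hc i) (hb i)
      _ = Fintype.card ι * δ * S + C * ((∑ i, |η i| ^ p i) + ∑ i, c i ^ conjExp (p i)) := by
          simp only [Finset.sum_add_distrib, Finset.mul_sum, Finset.sum_const, Finset.card_univ,
            nsmul_eq_mul, mul_add]
          ring
  have hεS : Fintype.card ι * δ * S ≤ ε * S := mul_le_mul_of_nonneg_right hδε hS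
  simp only [mul_sub, Finset.sum_sub_distrib]
  linarith

theorem stmt_11_general {N : ℕ} (Ω : Set (Fin N → ℝ)) (p : Fin N → (Fin N → ℝ) → ℝ)
    (pm pM : ℝ) (hpm : 1 < pm)
    (hpb : ∀ᵐ x ∂(volume.restrict Ω), ∀ i, pm ≤ p i x ∧ p i x ≤ pM)
    (a : (Fin N → ℝ) → ℝ → (Fin N → ℝ) → (Fin N → ℝ))
    (ahat : Fin N → ℝ → ℝ)
    (hahat_mono : ∀ i, MonotoneOn (ahat i) (Set.Ici 0))
    (hahat_pos : ∀ i, ∀ t : ℝ, 0 ≤ t → 0 < ahat i t)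
    (c : Fin N → (Fin N → ℝ) → ℝ)
    (hc_nonneg : ∀ i, ∀ᵐ x ∂(volume.restrict Ω), 0 ≤ c i x)
    (hgrowth : ∀ᵐ x ∂(volume.restrict Ω), ∀ (s : ℝ) (ξ : Fin N → ℝ) (i : Fin N),
      |a x s ξ i| ≤ ahat i |s| *
        ((∑ j, |ξ j| ^ p j x) ^ (1 / conjExp (p i x)) + c i x))
    (α : ℝ)
    (hcoer : ∀ᵐ x ∂(volume.restrict Ω), ∀ (s : ℝ) (ξ : Fin N → ℝ),
      α * ∑ i, |ξ i| ^ p i x ≤ ∑ i, a x s ξ i * ξ i)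
    (M ε : ℝ) (hM : 0 < M) (hε : 0 < ε) :
    ∃ C : ℝ, 0 ≤ C ∧ ∀ᵐ x ∂(volume.restrict Ω), ∀ s : ℝ, |s| ≤ M →
      ∀ ξ η : Fin N → ℝ,
        (α - ε) * (∑ i, |ξ i| ^ p i x) -
            C * ((∑ i, |η i| ^ p i x) + ∑ i, c i x ^ conjExp (p i x)) ≤
          ∑ i, a x s ξ i * (ξ i - η i) := by
  set K := 1 + ∑ i, ahat i M
  -- `N + 1` rather than `N`, so that `δ > 0` also when `N = 0`
  set δ := min (ε / (N + 1)) 1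
  set C := δ ^ (1 - pM) * K ^ pM + 1 + K ^ conjExp pm
  have hahat_M : ∀ i, 0 ≤ ahat i M := fun i => (hahat_pos i M hM.le).le
  have hK : 1 ≤ K := le_add_of_nonneg_right (Finset.sum_nonneg fun i _ => hahat_M i)
  have hδ : 0 < δ := lt_min (by positivity) one_pos
  have hδε : Fintype.card (Fin N) * δ ≤ ε := by
    calc Fintype.card (Fin N) * δ ≤ N * (ε / (N + 1)) := by
          rw [Fintype.card_fin]; gcongr; exact min_le_left _ _
      _ ≤ ε := by
          rw [mul_div_assoc', div_le_iff₀ (by positivity)]; nlinarith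
  have hahat_le : ∀ i, ∀ s, |s| ≤ M → ahat i |s| ≤ K := fun i s hs => calc
    ahat i |s| ≤ ahat i M := hahat_mono i (abs_nonneg s) hM.le hs
    _ ≤ ∑ j, ahat j M := Finset.single_le_sum (fun j _ => hahat_M j) (Finset.mem_univ i)
    _ ≤ K := le_add_of_nonneg_left zero_le_one
  refine ⟨C, by positivity, ?_⟩
  filter_upwards [hpb, hgrowth, hcoer, ae_all_iff.2 hc_nonneg] with x hpx hgx hcox hcx s hs ξ η
  refine sum_mul_sub_ge_of_growth_of_coercive hpm hpx hδ (min_le_right _ _) hK le_rfl hδε hcx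
    (fun i => (hgx s ξ i).trans ?_) (hcox s ξ)
  exact mul_le_mul_of_nonneg_right (hahat_le i s hs) (add_nonneg (by positivity) (hcx i))

/-- the Young-inequality estimate used in Step 5 of the paper:
under the growth and coercivity conditions on `a`, for every `M > 0` and
`ε ∈ (0, α)` there is a constant `C ≥ 0` such that for a.e. `x`, all `|s| ≤ M` and
all `ξ, η`:
`a(x,s,ξ)·(ξ − η) ≥ (α − ε) Σᵢ |ξᵢ|^{pᵢ(x)} − C (Σᵢ |ηᵢ|^{pᵢ(x)} + Σᵢ cᵢ(x)^{pᵢ'(x)})`. -/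
theorem stmt_11 {N : ℕ} (Ω : Set (Fin N → ℝ)) (hΩ : MeasurableSet Ω)
    (p : Fin N → (Fin N → ℝ) → ℝ) (hp : ∀ i, Measurable (p i))
    (pm pM : ℝ) (hpm : 1 < pm)
    (hpb : ∀ᵐ x ∂(volume.restrict Ω), ∀ i, pm ≤ p i x ∧ p i x ≤ pM)
    (a : (Fin N → ℝ) → ℝ → (Fin N → ℝ) → (Fin N → ℝ))
    (ha_meas : ∀ (s : ℝ) (ξ : Fin N → ℝ), Measurable (fun x => a x s ξ))
    (ahat : Fin N → ℝ → ℝ) (hahat_cont : ∀ i, Continuous (ahat i))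
    (hahat_mono : ∀ i, MonotoneOn (ahat i) (Set.Ici 0))
    (hahat_pos : ∀ i, ∀ t : ℝ, 0 ≤ t → 0 < ahat i t)
    (c : Fin N → (Fin N → ℝ) → ℝ) (hc_meas : ∀ i, Measurable (c i))
    (hc_nonneg : ∀ i, ∀ᵐ x ∂(volume.restrict Ω), 0 ≤ c i x)
    (hgrowth : ∀ᵐ x ∂(volume.restrict Ω), ∀ (s : ℝ) (ξ : Fin N → ℝ) (i : Fin N),
      |a x s ξ i| ≤ ahat i |s| *
        ((∑ j, |ξ j| ^ p j x) ^ (1 / conjExp (p i x)) + c i x))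
    (α : ℝ) (hα : 0 < α)
    (hcoer : ∀ᵐ x ∂(volume.restrict Ω), ∀ (s : ℝ) (ξ : Fin N → ℝ),
      α * ∑ i, |ξ i| ^ p i x ≤ ∑ i, a x s ξ i * ξ i)
    (M ε : ℝ) (hM : 0 < M) (hε : 0 < ε) (hεα : ε < α) :
    ∃ C : ℝ, 0 ≤ C ∧ ∀ᵐ x ∂(volume.restrict Ω), ∀ s : ℝ, |s| ≤ M →
      ∀ ξ η : Fin N → ℝ,
        (α - ε) * (∑ i, |ξ i| ^ p i x) -
            C * ((∑ i, |η i| ^ p i x) + ∑ i, c i x ^ conjExp (p i x)) ≤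
          ∑ i, a x s ξ i * (ξ i - η i) :=
  stmt_11_general Ω p pm pM hpm hpb a ahat hahat_mono hahat_pos c hc_nonneg hgrowth α hcoer M ε hM
    hε
end

section
/- Let Ω ⊆ ℝ^N be a Lebesgue-measurable set and p₀: Ω → ℝ measurable with 1 < p₀⁻ ≤ p₀(x) ≤ p₀⁺ < ∞ for a.e. x. Let (u_j) be measurable functions Ω → ℝ with sup_j ∫_Ω |u_j(x)|^{p₀(x)} dx < ∞ and u_j → u a.e. in Ω. Then |u_j|^{p₀(·)−2} u_j converges weakly to |u|^{p₀(·)−2} u in L^{p₀'(·)}(Ω), i.e. ∫_Ω |u_j(x)|^{p₀(x)−2} u_j(x) φ(x) dx → ∫_Ω |u(x)|^{p₀(x)−2} u(x) φ(x) dx as j → ∞ for every measurable φ: Ω → ℝ with ∫_Ω |φ(x)|^{p₀(x)} dx < ∞ (with the convention |t|^{q−2} t = 0 when t = 0). -/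
open MeasureTheory Filter ENNReal


lemma rpow_sub_one_mul {b : ℝ} (hb : 0 < b) (p : ℝ) : b ^ (p-1) * b = b ^ p := by
  calc b ^ (p-1) * b = b ^ (p-1) * b ^ (1:ℝ) := by rw [Real.rpow_one]
  _ = b ^ (p-1+1) := (Real.rpow_add hb _ _).symm
  _ = b ^ p := by congr 1; ring

lemma pw_eq (p t : ℝ) (hp : 1 < p) : |t| ^ (p-2) * |t| = |t| ^ (p-1) := by
  rcases eq_or_ne t 0 with h | h
  · simp [h, Real.zero_rpow (by linarith : p - 1 ≠ 0)]
  · have ht : (0:ℝ) < |t| := abs_pos.2 h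
    calc |t| ^ (p-2) * |t| = |t| ^ (p-2) * |t| ^ (1:ℝ) := by rw [Real.rpow_one]
    _ = |t| ^ (p-2+1) := (Real.rpow_add ht _ _).symm
    _ = |t| ^ (p-1) := by congr 1; ring

lemma pw_abs (p t b : ℝ) (hp : 1 < p) : |(|t| ^ (p-2) * t * b)| = |t| ^ (p-1) * |b| := by
  rw [abs_mul, abs_mul, abs_of_nonneg (Real.rpow_nonneg (abs_nonneg t) _), pw_eq p t hp]

lemma young (p a b : ℝ) (hp : 1 < p) (ha : 0 ≤ a) (hb : 0 ≤ b) :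
    a ^ (p-1) * b ≤ a ^ p + b ^ p := by
  rcases le_total a b with hab | hab
  · rcases eq_or_lt_of_le hb with rfl | hb'
    · have h0 : a = 0 := le_antisymm hab ha
      simp only [h0, Real.zero_rpow (by linarith : p - 1 ≠ 0), zero_mul, mul_zero]
      positivity
    · calc a ^ (p-1) * b ≤ b ^ (p-1) * b :=
            mul_le_mul_of_nonneg_right (Real.rpow_le_rpow ha hab (by linarith)) hb
      _ = b ^ p := rpow_sub_one_mul hb' p
      _ ≤ a ^ p + b ^ p := by
          have : 0 ≤ a ^ p := Real.rpow_nonneg ha _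
          linarith
  · rcases eq_or_lt_of_le ha with rfl | ha'
    · have h0 : b = 0 := le_antisymm hab hb
      simp only [h0, Real.zero_rpow (by linarith : p - 1 ≠ 0), zero_mul, mul_zero]
      positivity
    · calc a ^ (p-1) * b ≤ a ^ (p-1) * a := mul_le_mul_of_nonneg_left hab (Real.rpow_nonneg ha _)
      _ = a ^ p := rpow_sub_one_mul ha' p
      _ ≤ a ^ p + b ^ p := by
          have : 0 ≤ b ^ p := Real.rpow_nonneg hb _
          linarith

lemma young_param (pM p δ a b : ℝ) (hp : 1 < p) (hpM : p ≤ pM) (hδ0 : 0 < δ) (hδ1 : δ ≤ 1)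
    (ha : 0 ≤ a) (hb : 0 ≤ b) :
    a ^ (p-1) * b ≤ δ * a ^ p + δ ^ (1-pM) * b ^ p := by
  have hδM : δ ^ (1-p) ≤ δ ^ (1-pM) :=
    Real.rpow_le_rpow_of_exponent_ge hδ0 hδ1 (by linarith)
  have hbp : 0 ≤ b ^ p := Real.rpow_nonneg hb _
  have hap : 0 ≤ a ^ p := Real.rpow_nonneg ha _
  have hcM : 0 ≤ δ ^ (1-pM) := Real.rpow_nonneg hδ0.le _
  rcases le_total b (δ * a) with hba | hba
  · rcases eq_or_lt_of_le ha with rfl | ha'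
    · have hb0 : b = 0 := le_antisymm (by simpa using hba) hb
      simp only [hb0, mul_zero]
      positivity
    · calc a ^ (p-1) * b ≤ a ^ (p-1) * (δ * a) :=
            mul_le_mul_of_nonneg_left hba (Real.rpow_nonneg ha _)
      _ = δ * (a ^ (p-1) * a) := by ring
      _ = δ * a ^ p := by rw [rpow_sub_one_mul ha']
      _ ≤ δ * a ^ p + δ ^ (1-pM) * b ^ p := by nlinarith
  · rcases eq_or_lt_of_le hb with rfl | hb'
    · simp only [Real.zero_rpow (by linarith : p ≠ 0), mul_zero]
      positivity
    · have hab : a ≤ b / δ := by rw [le_div_iff₀ hδ0]; linarith [mul_comm δ a]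
      calc a ^ (p-1) * b ≤ (b/δ) ^ (p-1) * b :=
            mul_le_mul_of_nonneg_right (Real.rpow_le_rpow ha hab (by linarith)) hb
      _ = (b ^ (p-1) / δ ^ (p-1)) * b := by rw [Real.div_rpow hb hδ0.le]
      _ = (b ^ (p-1) * b) * (δ ^ (p-1))⁻¹ := by ring
      _ = b ^ p * (δ ^ (p-1))⁻¹ := by rw [rpow_sub_one_mul hb']
      _ = δ ^ (1-p) * b ^ p := by
          rw [show (1:ℝ)-p = -(p-1) by ring, Real.rpow_neg hδ0.le]; ring
      _ ≤ δ ^ (1-pM) * b ^ p := mul_le_mul_of_nonneg_right hδM hbp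
      _ ≤ δ * a ^ p + δ ^ (1-pM) * b ^ p := by nlinarith

lemma pw_tendsto (p : ℝ) (hp : 1 < p) {v : ℕ → ℝ} {L : ℝ}
    (hv : Tendsto v atTop (nhds L)) :
    Tendsto (fun j => |v j| ^ (p-2) * v j) atTop (nhds (|L| ^ (p-2) * L)) := by
  rcases eq_or_ne L 0 with rfl | hL
  · rw [show |(0:ℝ)| ^ (p-2) * 0 = 0 by rw [mul_zero]]
    apply squeeze_zero_norm (a := fun j => |v j| ^ (p-1))
    · intro n
      have : ‖|v n| ^ (p-2) * v n‖ = |v n| ^ (p-2) * |v n| := by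
        rw [Real.norm_eq_abs, abs_mul, abs_of_nonneg (Real.rpow_nonneg (abs_nonneg _) _)]
      rw [this, pw_eq p (v n) hp]
    · have h1 : Tendsto (fun j => |v j|) atTop (nhds |(0:ℝ)|) := hv.abs
      have h2 := h1.rpow_const (p := p - 1) (Or.inr (by linarith))
      simpa [Real.zero_rpow (by linarith : p - 1 ≠ 0)] using h2
  · have hc : ContinuousAt (fun t : ℝ => |t| ^ (p-2) * t) L := by
      have h1 : ContinuousAt (fun t : ℝ => |t| ^ (p-2)) L := by
        have := Real.continuousAt_rpow_const |L| (p-2) (Or.inl (abs_ne_zero.2 hL))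
        exact this.comp continuous_abs.continuousAt
      exact h1.mul continuousAt_id
    exact (hc.tendsto).comp hv

lemma main_lemma {α : Type*} [MeasurableSpace α] (μ : Measure α) [SigmaFinite μ]
    (p₀ : α → ℝ) (hp₀ : Measurable p₀) (pm pM : ℝ) (hpm : 1 < pm)
    (hpb : ∀ᵐ x ∂μ, pm ≤ p₀ x ∧ p₀ x ≤ pM)
    (u : ℕ → α → ℝ) (hu : ∀ j, Measurable (u j))
    (ulim : α → ℝ) (hulim : Measurable ulim)
    (B : ℝ≥0∞) (hB : B < ⊤)
    (hmod : ∀ j, ∫⁻ x, ENNReal.ofReal (|u j x| ^ p₀ x) ∂μ ≤ B)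
    (hae : ∀ᵐ x ∂μ, Tendsto (fun j => u j x) atTop (nhds (ulim x)))
    (φ : α → ℝ) (hφ : Measurable φ)
    (hφm : (∫⁻ x, ENNReal.ofReal (|φ x| ^ p₀ x) ∂μ) < ⊤) :
    Tendsto (fun j => ∫ x, |u j x| ^ (p₀ x - 2) * u j x * φ x ∂μ) atTop
      (nhds (∫ x, |ulim x| ^ (p₀ x - 2) * ulim x * φ x ∂μ)) := by
  -- measurability
  have hfm : ∀ j, Measurable (fun x => |u j x| ^ (p₀ x - 2) * u j x * φ x) := fun j =>
    (((hu j).abs.pow (hp₀.sub measurable_const)).mul (hu j)).mul hφ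
  have hflm : Measurable (fun x => |ulim x| ^ (p₀ x - 2) * ulim x * φ x) :=
    ((hulim.abs.pow (hp₀.sub measurable_const)).mul hulim).mul hφ
  have hup : ∀ j, Measurable (fun x => |u j x| ^ p₀ x) := fun j => (hu j).abs.pow hp₀
  have hulp : Measurable (fun x => |ulim x| ^ p₀ x) := hulim.abs.pow hp₀
  have hφp : Measurable (fun x => |φ x| ^ p₀ x) := hφ.abs.pow hp₀
  -- Fatou for the limit modular
  have hlmod : ∫⁻ x, ENNReal.ofReal (|ulim x| ^ p₀ x) ∂μ ≤ B := by
    have key : ∀ᵐ x ∂μ, ENNReal.ofReal (|ulim x| ^ p₀ x)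
        = liminf (fun j => ENNReal.ofReal (|u j x| ^ p₀ x)) atTop := by
      filter_upwards [hae, hpb] with x hx hpx
      have h1 : Tendsto (fun j => |u j x| ^ p₀ x) atTop (nhds (|ulim x| ^ p₀ x)) :=
        hx.abs.rpow_const (Or.inr (by linarith [hpx.1]))
      exact ((ENNReal.tendsto_ofReal h1).liminf_eq).symm
    calc ∫⁻ x, ENNReal.ofReal (|ulim x| ^ p₀ x) ∂μ
        = ∫⁻ x, liminf (fun j => ENNReal.ofReal (|u j x| ^ p₀ x)) atTop ∂μ :=
          lintegral_congr_ae key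
      _ ≤ liminf (fun j => ∫⁻ x, ENNReal.ofReal (|u j x| ^ p₀ x) ∂μ) atTop :=
          lintegral_liminf_le (fun j => (hup j).ennreal_ofReal)
      _ ≤ liminf (fun _ : ℕ => B) atTop := Filter.liminf_le_liminf (.of_forall hmod)
      _ = B := liminf_const B
  -- integrability of modulars
  have int_of_lint : ∀ {g : α → ℝ}, Measurable g → (∀ x, 0 ≤ g x) →
      (∫⁻ x, ENNReal.ofReal (g x) ∂μ) < ⊤ → Integrable g μ := by
    intro g hg hg0 hfin
    exact ⟨hg.aestronglyMeasurable,
      (hasFiniteIntegral_iff_ofReal (.of_forall hg0)).2 hfin⟩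
  have hintu : ∀ j, Integrable (fun x => |u j x| ^ p₀ x) μ := fun j =>
    int_of_lint (hup j) (fun x => Real.rpow_nonneg (abs_nonneg _) _) (lt_of_le_of_lt (hmod j) hB)
  have hintul : Integrable (fun x => |ulim x| ^ p₀ x) μ :=
    int_of_lint hulp (fun x => Real.rpow_nonneg (abs_nonneg _) _) (lt_of_le_of_lt hlmod hB)
  have hintφ : Integrable (fun x => |φ x| ^ p₀ x) μ :=
    int_of_lint hφp (fun x => Real.rpow_nonneg (abs_nonneg _) _) hφm
  -- integrability of the tested functions
  have hfint : ∀ j, Integrable (fun x => |u j x| ^ (p₀ x - 2) * u j x * φ x) μ := by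
    intro j
    apply Integrable.mono' ((hintu j).add hintφ) (hfm j).aestronglyMeasurable
    filter_upwards [hpb] with x hpx
    have hp1 : 1 < p₀ x := lt_of_lt_of_le hpm hpx.1
    rw [Real.norm_eq_abs, pw_abs _ _ _ hp1]
    exact young _ _ _ hp1 (abs_nonneg _) (abs_nonneg _)
  have hflint : Integrable (fun x => |ulim x| ^ (p₀ x - 2) * ulim x * φ x) μ := by
    apply Integrable.mono' (hintul.add hintφ) hflm.aestronglyMeasurable
    filter_upwards [hpb] with x hpx
    have hp1 : 1 < p₀ x := lt_of_lt_of_le hpm hpx.1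
    rw [Real.norm_eq_abs, pw_abs _ _ _ hp1]
    exact young _ _ _ hp1 (abs_nonneg _) (abs_nonneg _)
  -- a.e. pointwise convergence
  have hfae : ∀ᵐ x ∂μ, Tendsto (fun j => |u j x| ^ (p₀ x - 2) * u j x * φ x) atTop
      (nhds (|ulim x| ^ (p₀ x - 2) * ulim x * φ x)) := by
    filter_upwards [hae, hpb] with x hx hpx
    exact (pw_tendsto _ (lt_of_lt_of_le hpm hpx.1) hx).mul_const (φ x)
  -- real bounds on modulars
  have hBr : ∀ j, ∫ x, |u j x| ^ p₀ x ∂μ ≤ B.toReal := by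
    intro j
    rw [integral_eq_lintegral_of_nonneg_ae
      (.of_forall fun x => Real.rpow_nonneg (abs_nonneg _) _) (hup j).aestronglyMeasurable]
    exact ENNReal.toReal_mono hB.ne (hmod j)
  have hBrl : ∫ x, |ulim x| ^ p₀ x ∂μ ≤ B.toReal := by
    rw [integral_eq_lintegral_of_nonneg_ae
      (.of_forall fun x => Real.rpow_nonneg (abs_nonneg _) _) hulp.aestronglyMeasurable]
    exact ENNReal.toReal_mono hB.ne hlmod
  -- the finite measure ν with density |φ|^{p₀}
  set ν : Measure α := μ.withDensity (fun x => ENNReal.ofReal (|φ x| ^ p₀ x)) with hν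
  have hνfin : ν Set.univ < ⊤ := by
    rw [hν, withDensity_apply _ MeasurableSet.univ, Measure.restrict_univ]; exact hφm
  have hνac : ν ≪ μ := withDensity_absolutelyContinuous _ _
  -- truncation sets
  set T : ℕ → Set α := fun n => spanningSets μ n ∩
    ((⋂ j, {x | |u j x| ≤ (n:ℝ)+1}) ∩ {x | |ulim x| ≤ (n:ℝ)+1}) with hT
  have hTmeas : ∀ n, MeasurableSet (T n) := fun n =>
    (measurableSet_spanningSets μ n).inter
      ((MeasurableSet.iInter fun j => measurableSet_le (hu j).abs measurable_const).inter
        (measurableSet_le hulim.abs measurable_const))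
  have hTmono : Monotone T := by
    intro n m hnm
    have hc : (n:ℝ)+1 ≤ (m:ℝ)+1 := by
      have : (n:ℝ) ≤ (m:ℝ) := Nat.cast_le.2 hnm
      linarith
    refine Set.inter_subset_inter (monotone_spanningSets μ hnm)
      (Set.inter_subset_inter ?_ ?_)
    · exact Set.iInter_mono fun j x hx => le_trans hx hc
    · exact fun x hx => le_trans hx hc
  have hcompl_anti : Antitone (fun n => (T n)ᶜ) := fun n m h =>
    Set.compl_subset_compl.2 (hTmono h)
  have hTlim : Tendsto (fun n => ν ((T n)ᶜ)) atTop (nhds (ν (⋂ n, (T n)ᶜ))) := by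
    have := tendsto_measure_iInter_atTop (μ := ν) (s := fun n => (T n)ᶜ)
      (fun n => ((hTmeas n).compl).nullMeasurableSet) hcompl_anti
      ⟨0, (lt_of_le_of_lt (measure_mono (Set.subset_univ _)) hνfin).ne⟩
    exact this
  have hTnull : ν (⋂ n, (T n)ᶜ) = 0 := by
    have hsub : (⋂ n, (T n)ᶜ) ⊆
        {x | ¬ Tendsto (fun j => u j x) atTop (nhds (ulim x))} := by
      intro x hx
      simp only [Set.mem_iInter, Set.mem_compl_iff] at hx
      intro ht
      have hxU : x ∈ ⋃ i, spanningSets μ i := by rw [iUnion_spanningSets]; trivial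
      obtain ⟨m, hm⟩ := Set.mem_iUnion.1 hxU
      obtain ⟨C, hC⟩ := ht.abs.bddAbove_range
      obtain ⟨k, hk⟩ := exists_nat_ge (max C |ulim x|)
      refine hx (max m k) ?_
      have hkc : (k:ℝ) ≤ ((max m k : ℕ):ℝ) + 1 := by
        have : (k:ℝ) ≤ ((max m k : ℕ):ℝ) := Nat.cast_le.2 (le_max_right m k)
        linarith
      refine ⟨monotone_spanningSets μ (le_max_left m k) hm, ?_, ?_⟩
      · refine Set.mem_iInter.2 fun j => ?_
        have h1 : |u j x| ≤ C := hC ⟨j, rfl⟩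
        have h2 : C ≤ (k:ℝ) := le_trans (le_max_left _ _) hk
        exact le_trans h1 (le_trans h2 hkc)
      · have h2 : |ulim x| ≤ (k:ℝ) := le_trans (le_max_right _ _) hk
        exact le_trans h2 hkc
    have hbadμ : μ {x | ¬ Tendsto (fun j => u j x) atTop (nhds (ulim x))} = 0 := by
      exact ae_iff.1 hae
    exact measure_mono_null hsub (hνac hbadμ)
  have hν0 : Tendsto (fun n => ν ((T n)ᶜ)) atTop (nhds 0) := by
    rwa [hTnull] at hTlim
  -- main ε-argument
  rw [Metric.tendsto_atTop]
  intro ε hε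
  have hBr0 : (0:ℝ) ≤ B.toReal := ENNReal.toReal_nonneg
  set Br : ℝ := B.toReal with hBrdef
  set δ : ℝ := min 1 (ε / (8 * (Br + 1))) with hδdef
  have hδ0 : 0 < δ := lt_min one_pos (by positivity)
  have hδ1 : δ ≤ 1 := min_le_left _ _
  have hδB : δ * Br ≤ ε/8 := by
    have h1 : δ * Br ≤ ε / (8*(Br+1)) * Br :=
      mul_le_mul_of_nonneg_right (min_le_right _ _) hBr0
    have h2 : ε / (8*(Br+1)) * Br ≤ ε/8 := by
      rw [div_mul_eq_mul_div, div_le_div_iff₀ (by positivity) (by norm_num)]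
      nlinarith
    linarith
  set Cδ : ℝ := δ ^ (1 - pM) with hCδ
  have hCδ0 : 0 < Cδ := Real.rpow_pos_of_pos hδ0 _
  -- choose n
  have hev : ∀ᶠ n in atTop, ν ((T n)ᶜ) < ENNReal.ofReal (ε/(8*Cδ)) :=
    hν0.eventually_lt_const (ENNReal.ofReal_pos.2 (by positivity))
  obtain ⟨n, hn⟩ := hev.exists
  -- tail of φ is small
  have hIφ : ∫ x in (T n)ᶜ, |φ x| ^ p₀ x ∂μ < ε/(8*Cδ) := by
    rw [integral_eq_lintegral_of_nonneg_ae
      (.of_forall fun x => Real.rpow_nonneg (abs_nonneg _) _)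
      hφp.aestronglyMeasurable.restrict]
    refine ENNReal.toReal_lt_of_lt_ofReal ?_
    rwa [hν, withDensity_apply _ (hTmeas n).compl] at hn
  -- tail bound for the tested functions
  have tail : ∀ (w : α → ℝ), Measurable w →
      Integrable (fun x => |w x| ^ p₀ x) μ → (∫ x, |w x| ^ p₀ x ∂μ ≤ Br) →
      Integrable (fun x => |w x| ^ (p₀ x - 2) * w x * φ x) μ →
      |∫ x in (T n)ᶜ, |w x| ^ (p₀ x - 2) * w x * φ x ∂μ| ≤ ε/4 := by
    intro w hw hwint hwB hwfint
    have step1 : |∫ x in (T n)ᶜ, |w x| ^ (p₀ x - 2) * w x * φ x ∂μ|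
        ≤ ∫ x in (T n)ᶜ, |(|w x| ^ (p₀ x - 2) * w x * φ x)| ∂μ := by
      simpa only [Real.norm_eq_abs] using
        norm_integral_le_integral_norm (μ := μ.restrict (T n)ᶜ)
          (fun x => |w x| ^ (p₀ x - 2) * w x * φ x)
    have step2 : ∫ x in (T n)ᶜ, |(|w x| ^ (p₀ x - 2) * w x * φ x)| ∂μ
        ≤ ∫ x in (T n)ᶜ, (δ * |w x| ^ p₀ x + Cδ * |φ x| ^ p₀ x) ∂μ := by
      apply integral_mono_ae hwfint.abs.restrict
        ((hwint.const_mul δ).add (hintφ.const_mul Cδ)).restrict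
      apply ae_restrict_of_ae
      filter_upwards [hpb] with x hpx
      have hp1 : 1 < p₀ x := lt_of_lt_of_le hpm hpx.1
      rw [pw_abs _ _ _ hp1]
      exact young_param pM _ δ _ _ hp1 hpx.2 hδ0 hδ1 (abs_nonneg _) (abs_nonneg _)
    have step3 : ∫ x in (T n)ᶜ, (δ * |w x| ^ p₀ x + Cδ * |φ x| ^ p₀ x) ∂μ
        = δ * ∫ x in (T n)ᶜ, |w x| ^ p₀ x ∂μ + Cδ * ∫ x in (T n)ᶜ, |φ x| ^ p₀ x ∂μ := by
      rw [integral_add (hwint.const_mul δ).restrict (hintφ.const_mul Cδ).restrict,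
        integral_const_mul, integral_const_mul]
    have step4 : δ * ∫ x in (T n)ᶜ, |w x| ^ p₀ x ∂μ ≤ ε/8 := by
      have h4 : ∫ x in (T n)ᶜ, |w x| ^ p₀ x ∂μ ≤ Br :=
        le_trans (setIntegral_le_integral hwint
          (.of_forall fun x => Real.rpow_nonneg (abs_nonneg _) _)) hwB
      have := mul_le_mul_of_nonneg_left h4 hδ0.le
      linarith
    have step5 : Cδ * ∫ x in (T n)ᶜ, |φ x| ^ p₀ x ∂μ ≤ ε/8 := by
      have h5 := mul_le_mul_of_nonneg_left hIφ.le hCδ0.le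
      have h6 : Cδ * (ε/(8*Cδ)) = ε/8 := by
        field_simp
      linarith
    have hnn : (0:ℝ) ≤ ∫ x in (T n)ᶜ, |(|w x| ^ (p₀ x - 2) * w x * φ x)| ∂μ :=
      integral_nonneg fun x => abs_nonneg _
    linarith
  -- dominated convergence on T n
  have hμS : μ (T n) < ⊤ :=
    lt_of_le_of_lt (measure_mono Set.inter_subset_left) (measure_spanningSets_lt_top μ n)
  have hfinS : IsFiniteMeasure (μ.restrict (T n)) := by
    constructor
    rwa [Measure.restrict_apply_univ]
  have hφ1int : Integrable (fun x => |φ x|) (μ.restrict (T n)) := by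
    apply Integrable.mono' ((integrable_const 1).add (hintφ.restrict (s := T n)))
      hφ.abs.aestronglyMeasurable
    apply ae_restrict_of_ae
    filter_upwards [hpb] with x hpx
    rw [Real.norm_eq_abs, abs_abs]
    simp only [Pi.add_apply]
    rcases le_total (|φ x|) 1 with h | h
    · have h0 : 0 ≤ |φ x| ^ p₀ x := Real.rpow_nonneg (abs_nonneg _) _
      linarith
    · have h2 : |φ x| ^ (1:ℝ) ≤ |φ x| ^ p₀ x :=
        Real.rpow_le_rpow_of_exponent_le h (by linarith [hpx.1])
      rw [Real.rpow_one] at h2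
      linarith
  set CM : ℝ := ((n:ℝ)+1) ^ (pM - 1) with hCM
  have hDCT : Tendsto (fun j => ∫ x in T n, |u j x| ^ (p₀ x - 2) * u j x * φ x ∂μ) atTop
      (nhds (∫ x in T n, |ulim x| ^ (p₀ x - 2) * ulim x * φ x ∂μ)) := by
    apply tendsto_integral_of_dominated_convergence (bound := fun x => CM * |φ x|)
      (fun j => (hfm j).aestronglyMeasurable.restrict) (hφ1int.const_mul CM)
    · intro j
      filter_upwards [ae_restrict_mem (hTmeas n), ae_restrict_of_ae hpb] with x hxS hpx
      have hp1 : 1 < p₀ x := lt_of_lt_of_le hpm hpx.1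
      rw [Real.norm_eq_abs, pw_abs _ _ _ hp1]
      have hb : |u j x| ≤ (n:ℝ)+1 := Set.mem_iInter.1 hxS.2.1 j
      have h1 : |u j x| ^ (p₀ x - 1) ≤ ((n:ℝ)+1) ^ (p₀ x - 1) :=
        Real.rpow_le_rpow (abs_nonneg _) hb (by linarith)
      have h2 : ((n:ℝ)+1) ^ (p₀ x - 1) ≤ CM :=
        Real.rpow_le_rpow_of_exponent_le (by simp) (by linarith [hpx.2])
      exact mul_le_mul_of_nonneg_right (le_trans h1 h2) (abs_nonneg (φ x))
    · exact ae_restrict_of_ae hfae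
  -- conclude
  obtain ⟨N, hN⟩ := (Metric.tendsto_atTop.1 hDCT) (ε/8) (by positivity)
  refine ⟨N, fun j hj => ?_⟩
  have hsplit_j := integral_add_compl (hTmeas n) (hfint j)
  have hsplit_l := integral_add_compl (hTmeas n) hflint
  have h1 : |∫ x in T n, |u j x| ^ (p₀ x - 2) * u j x * φ x ∂μ
      - ∫ x in T n, |ulim x| ^ (p₀ x - 2) * ulim x * φ x ∂μ| < ε/8 := by
    have := hN j hj
    rwa [Real.dist_eq] at this
  have h2 := tail (u j) (hu j) (hintu j) (hBr j) (hfint j)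
  have h3 := tail ulim hulim hintul hBrl hflint
  rw [Real.dist_eq, ← hsplit_j, ← hsplit_l]
  have h1' := abs_lt.1 h1
  have h2' := abs_le.1 h2
  have h3' := abs_le.1 h3
  rw [abs_lt]
  constructor <;> linarith

/-- convergence (38) in the Appendix: if `(u_j)` is bounded in the
modular of `L^{p₀(·)}(Ω)` and `u_j → u` a.e., then `|u_j|^{p₀(·)-2} u_j` converges
weakly to `|u|^{p₀(·)-2} u` in `L^{p₀'(·)}(Ω)`, i.e. tested against every `φ` with
finite modular `∫_Ω |φ|^{p₀(x)} dx < ∞`. -/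
theorem stmt_13 {N : ℕ} (Ω : Set (Fin N → ℝ)) (hΩ : MeasurableSet Ω)
    (p₀ : (Fin N → ℝ) → ℝ) (hp₀ : Measurable p₀)
    (pm pM : ℝ) (hpm : 1 < pm)
    (hpb : ∀ᵐ x ∂(volume.restrict Ω), pm ≤ p₀ x ∧ p₀ x ≤ pM)
    (u : ℕ → (Fin N → ℝ) → ℝ) (hu : ∀ j, Measurable (u j))
    (ulim : (Fin N → ℝ) → ℝ) (hulim : Measurable ulim)
    (B : ℝ≥0∞) (hB : B < ⊤)
    (hmod : ∀ j, ∫⁻ x in Ω, ENNReal.ofReal (|u j x| ^ p₀ x) ≤ B)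
    (hae : ∀ᵐ x ∂(volume.restrict Ω),
      Tendsto (fun j => u j x) atTop (nhds (ulim x))) :
    ∀ φ : (Fin N → ℝ) → ℝ, Measurable φ →
      (∫⁻ x in Ω, ENNReal.ofReal (|φ x| ^ p₀ x)) < ⊤ →
      Tendsto (fun j => ∫ x in Ω, |u j x| ^ (p₀ x - 2) * u j x * φ x) atTop
        (nhds (∫ x in Ω, |ulim x| ^ (p₀ x - 2) * ulim x * φ x)) := by
  intro φ hφ hφm
  exact main_lemma (volume.restrict Ω) p₀ hp₀ pm pM hpm hpb u hu ulim hulim B hB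
    hmod hae φ hφ hφm
end
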